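/- arXiv:2104.12082 — 3 statements merged into one kernel-verified Lean document; each statement's English description precedes it below -/
import Mathlib

section
/- Let G be an r-regular orderenergetic graph of order p and let n ≥ 1. Then the join G ∨ K̄_n of G with the empty graph on n vertices is orderenergetic if and only if n = 4p − 2r. -/
open Matrix SimpleGraph Finset

variable {V W : Type*}

/-- The adjacency matrix of a simple graph over ℝ is Hermitian. -/
lemma adjMatrix_isHermitian [Fintype V] [DecidableEq V] (G : SimpleGraph V)
    [DecidableRel G.Adj] : (G.adjMatrix ℝ).IsHermitian := by
  rw [Matrix.IsHermitian, Matrix.conjTranspose_eq_transpose_of_trivial]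
  exact G.isSymm_adjMatrix

/-- The energy of a finite simple graph: the sum of the absolute values of the
eigenvalues of its real adjacency matrix. -/
noncomputable def graphEnergy [Fintype V] [DecidableEq V] (G : SimpleGraph V) : ℝ := by
  classical
  exact ∑ i, |(adjMatrix_isHermitian G).eigenvalues i|

/-- The spectrum of a finite simple graph: the multiset of eigenvalues (with
multiplicity) of its real adjacency matrix. -/
noncomputable def graphSpectrum [Fintype V] [DecidableEq V] (G : SimpleGraph V) : Multiset ℝ := by
  classical
  exact Finset.univ.val.map (adjMatrix_isHermitian G).eigenvalues

/-- A graph is integral if every eigenvalue of its adjacency matrix is an integer. -/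
def IsIntegralGraph [Fintype V] [DecidableEq V] (G : SimpleGraph V) : Prop :=
  ∀ x ∈ graphSpectrum G, ∃ k : ℤ, x = (k : ℝ)

/-- The m-shadow graph of `G`, on vertex set `Fin m × V`: `(i,u)` and `(j,v)` are
adjacent iff `u` and `v` are adjacent in `G`. -/
def shadowGraph (m : ℕ) (G : SimpleGraph V) : SimpleGraph (Fin m × V) where
  Adj x y := G.Adj x.2 y.2
  symm := ⟨fun _ _ h => h.symm⟩
  loopless := ⟨fun _ h => G.irrefl h⟩

/-- The duplicate graph of `G`, on vertex set `V ⊕ V`: `inl a` is adjacent to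
`inr b` iff `a` and `b` are adjacent in `G`; no other adjacencies. -/
def duplicateGraph (G : SimpleGraph V) : SimpleGraph (V ⊕ V) where
  Adj x y :=
    match x, y with
    | Sum.inl a, Sum.inr b => G.Adj a b
    | Sum.inr a, Sum.inl b => G.Adj a b
    | _, _ => False
  symm := ⟨by rintro (a | a) (b | b) h <;> first | exact h.symm | exact h.elim⟩
  loopless := ⟨by rintro (a | a) h <;> exact h⟩

/-- The Kronecker (tensor) product of two simple graphs. -/
def tensorGraph (G : SimpleGraph V) (H : SimpleGraph W) : SimpleGraph (V × W) where
  Adj x y := G.Adj x.1 y.1 ∧ H.Adj x.2 y.2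
  symm := ⟨fun _ _ h => ⟨h.1.symm, h.2.symm⟩⟩
  loopless := ⟨fun _ h => G.irrefl h.1⟩

/-- The m-splitting graph of `G`, on vertex set `V ⊕ (Fin m × V)`: original
vertices keep their adjacencies, an original vertex `u` is adjacent to a copy
`(i,v)` iff `u` is adjacent to `v` in `G`, and copies are pairwise non-adjacent. -/
def splittingGraph (m : ℕ) (G : SimpleGraph V) : SimpleGraph (V ⊕ (Fin m × V)) where
  Adj x y :=
    match x, y with
    | Sum.inl u, Sum.inl v => G.Adj u v
    | Sum.inl u, Sum.inr iv => G.Adj u iv.2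
    | Sum.inr iu, Sum.inl v => G.Adj iu.2 v
    | Sum.inr _, Sum.inr _ => False
  symm := ⟨by rintro (u | iu) (v | iv) h <;> first | exact h.symm | exact h.elim⟩
  loopless := ⟨by rintro (u | iu) h <;> first | exact G.irrefl h | exact h⟩

/-- The join of two simple graphs: their disjoint union together with all edges
between the two parts. -/
def joinGraph (G : SimpleGraph V) (H : SimpleGraph W) : SimpleGraph (V ⊕ W) where
  Adj x y :=
    match x, y with
    | Sum.inl a, Sum.inl b => G.Adj a b
    | Sum.inr a, Sum.inr b => H.Adj a b
    | _, _ => True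
  symm := ⟨by rintro (a | a) (b | b) h <;> first | exact h.symm | trivial⟩
  loopless := ⟨by rintro (a | a) h <;> first | exact G.irrefl h | exact H.irrefl h⟩

/-- The superpath graph on a sequence of part sizes: independent sets `W i` of
size `a i`, where vertices in parts `i` and `j` are adjacent iff `|i - j| = 1`. -/
def superpathGraph {t : ℕ} (a : Fin t → ℕ) : SimpleGraph (Σ i : Fin t, Fin (a i)) where
  Adj x y := (x.1 : ℕ) + 1 = (y.1 : ℕ) ∨ (y.1 : ℕ) + 1 = (x.1 : ℕ)
  symm := ⟨fun _ _ h => h.symm⟩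
  loopless := ⟨fun x h => by omega⟩


/-!
The adjacency matrix of `G ∨ K̄_n` is the block matrix `[[A, J], [J, 0]]` with all-ones blocks
`J`. Since `A J = r J`, a Schur complement followed by a rank-one determinant computation gives
`x (x - r) χ_{G ∨ K̄_n}(x) = x ^ n (x² - r x - n p) χ_G(x)`: the spectrum of the join is that of `G`
with the eigenvalue `r` replaced by the two roots `(r ± √(r² + 4 n p)) / 2`, of opposite signs,
and `n - 1` zeros. Hence `ε(G ∨ K̄_n) = ε(G) + √(r² + 4 n p) - r`, and for `ε(G) = p` this equals
`p + n` iff `√(r² + 4 n p) = n + r`, i.e. iff `n (n + 2 r - 4 p) = 0`.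
-/

open Polynomial

section BlockDeterminant

variable {K : Type*} [Field K] {l m n : Type*}

lemma ones_mul_ones [Fintype m] :
    (of fun _ _ => 1 : Matrix l m K) * (of fun _ _ => 1 : Matrix m n K) =
      (Fintype.card m : K) • of fun _ _ => 1 := by
  ext; simp [mul_apply]

lemma det_sub_smul_ones_of_mul_ones [Fintype m] [DecidableEq m] {M : Matrix m m K} {μ : K}
    (c : K) (hμ : μ ≠ 0) (hM : M * of (fun _ _ => 1) = μ • of fun _ _ => 1) :
    (M - c • of fun _ _ => 1).det = M.det * (1 - c * Fintype.card m / μ) := by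
  have hrankOne : replicateCol Unit (fun _ : m => -(c / μ)) *
      replicateRow Unit (fun _ : m => (1 : K)) = -(c / μ) • (of fun _ _ => 1 : Matrix m m K) := by
    ext; simp [mul_apply]
  have hfactor : M - c • of (fun _ _ => 1) = M * ((1 : Matrix m m K) +
      replicateCol Unit (fun _ : m => -(c / μ)) * replicateRow Unit (fun _ : m => (1 : K))) := by
    rw [hrankOne, Matrix.mul_add, Matrix.mul_one, Matrix.mul_smul, hM, smul_smul]
    field_simp
    rw [sub_eq_add_neg, ← neg_smul]
  rw [hfactor, det_mul, det_one_add_replicateCol_mul_replicateRow]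
  congr 1
  simp [dotProduct]
  ring

lemma det_scalar_sub_fromBlocks_ones_zero [Fintype m] [DecidableEq m] [Fintype n]
    [DecidableEq n] {A : Matrix m m K} {r x : K} (hA : ∀ i, ∑ j, A i j = r) (hx : x ≠ 0)
    (hxr : x ≠ r) :
    x * (x - r) * (scalar (m ⊕ n) x - fromBlocks A (of fun _ _ => 1) (of fun _ _ => 1) 0).det =
      x ^ Fintype.card n * (x ^ 2 - r * x - Fintype.card n * Fintype.card m) *
        (scalar m x - A).det := by
  have hblocks : scalar (m ⊕ n) x - fromBlocks A (of fun _ _ => 1) (of fun _ _ => 1) 0 =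
      fromBlocks (scalar m x - A) (-of fun _ _ => 1) (-of fun _ _ => 1) (scalar n x) := by
    ext (i | i) (j | j) <;> simp [diagonal_apply]
  have hrow : (scalar m x - A) * of (fun _ _ => 1) = (x - r) • of fun _ _ => (1 : K) := by
    ext i j
    simp [mul_apply, hA, diagonal_apply]
  have : Invertible x := invertibleOfNonzero hx
  have : Invertible (scalar n x) := Invertible.map (scalar n).toMonoidHom x
  have hschur : (-of fun _ _ => 1 : Matrix m n K) * ⅟(scalar n x) *
      (-of fun _ _ => 1 : Matrix n m K) = (x⁻¹ * Fintype.card n) • of fun _ _ => 1 := by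
    rw [invOf_eq_right_inv (b := scalar n x⁻¹) (by rw [← map_mul, mul_inv_cancel₀ hx, map_one]),
      Matrix.neg_mul, Matrix.neg_mul, Matrix.mul_neg, neg_neg, scalar_apply,
      ← smul_one_eq_diagonal, Matrix.mul_smul, Matrix.mul_one, Matrix.smul_mul, ones_mul_ones,
      smul_smul]
  rw [hblocks, det_fromBlocks₂₂, hschur,
    det_sub_smul_ones_of_mul_ones _ (sub_ne_zero.2 hxr) hrow, scalar_apply, det_diagonal,
    prod_const, card_univ]
  field_simp [sub_ne_zero.2 hxr]

lemma charpoly_fromBlocks_ones_zero [Infinite K] [Fintype m] [DecidableEq m] [Fintype n]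
    [DecidableEq n] {A : Matrix m m K} {r : K} (hA : ∀ i, ∑ j, A i j = r) :
    X * (X - C r) *
        (fromBlocks A (of fun _ _ => 1) (of fun _ _ => 1) (0 : Matrix n n K)).charpoly =
      X ^ Fintype.card n * (X ^ 2 - C r * X - C (Fintype.card n * Fintype.card m : K)) *
        A.charpoly := by
  refine eq_of_infinite_eval_eq _ _ (({0, r} : Set K).toFinite.infinite_compl.mono ?_)
  intro x hx
  simp only [Set.mem_compl_iff, Set.mem_insert_iff, Set.mem_singleton_iff, not_or] at hx
  simpa [eval_charpoly] using det_scalar_sub_fromBlocks_ones_zero (n := n) hA hx.1 hx.2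

end BlockDeterminant

noncomputable def rootAbsSum (q : ℝ[X]) : ℝ :=
  (q.roots.map fun x => |x|).sum

lemma rootAbsSum_mul {p q : ℝ[X]} (hp : p ≠ 0) (hq : q ≠ 0) :
    rootAbsSum (p * q) = rootAbsSum p + rootAbsSum q := by
  simp [rootAbsSum, roots_mul (mul_ne_zero hp hq)]

lemma rootAbsSum_X_sub_C (a : ℝ) : rootAbsSum (X - C a) = |a| := by
  simp [rootAbsSum]

lemma rootAbsSum_X : rootAbsSum X = 0 := by
  simp [rootAbsSum]

lemma rootAbsSum_X_pow (n : ℕ) : rootAbsSum (X ^ n) = 0 := by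
  simp [rootAbsSum, Multiset.map_nsmul, Multiset.sum_nsmul]

lemma rootAbsSum_X_sq_sub_C_mul_X_sub_C (b c : ℝ) (hc : 0 ≤ c) :
    rootAbsSum (X ^ 2 - C b * X - C c) = √(b ^ 2 + 4 * c) := by
  set s := √(b ^ 2 + 4 * c)
  have hs : s ^ 2 = b ^ 2 + 4 * c := Real.sq_sqrt (by positivity)
  have hbs : |b| ≤ s := Real.abs_le_sqrt (by linarith)
  have hfactor : X ^ 2 - C b * X - C c = (X - C ((b + s) / 2)) * (X - C ((b - s) / 2)) := by
    rw [show C b = C ((b + s) / 2) + C ((b - s) / 2) by rw [← C_add]; ring_nf,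
      show C c = -(C ((b + s) / 2) * C ((b - s) / 2)) by rw [← C_mul, ← C_neg]; congr 1; nlinarith]
    ring
  rw [hfactor, rootAbsSum_mul (X_sub_C_ne_zero _) (X_sub_C_ne_zero _), rootAbsSum_X_sub_C,
    rootAbsSum_X_sub_C, abs_of_nonneg (by linarith [neg_abs_le b]),
    abs_of_nonpos (by linarith [le_abs_self b])]
  ring

lemma graphEnergy_eq_rootAbsSum_charpoly [Fintype V] [DecidableEq V] (G : SimpleGraph V)
    [DecidableRel G.Adj] : graphEnergy G = rootAbsSum (G.adjMatrix ℝ).charpoly := by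
  rw [rootAbsSum, (adjMatrix_isHermitian G).roots_charpoly_eq_eigenvalues, graphEnergy]
  simp only [Multiset.map_map, Function.comp_def, RCLike.ofReal_real_eq_id, id]
  convert (Finset.sum_map_val univ _).symm

lemma adjMatrix_joinGraph {α : Type*} [Zero α] [One α] [DecidableEq V] [DecidableEq W]
    (G : SimpleGraph V) (H : SimpleGraph W) [DecidableRel G.Adj] [DecidableRel H.Adj]
    [DecidableRel (joinGraph G H).Adj] :
    (joinGraph G H).adjMatrix α =
      fromBlocks (G.adjMatrix α) (of fun _ _ => 1) (of fun _ _ => 1) (H.adjMatrix α) := by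
  ext (i | i) (j | j) <;> simp only [adjMatrix_apply] <;> simp [joinGraph] <;> congr

lemma sum_adjMatrix_row_of_isRegularOfDegree [Fintype V] {G : SimpleGraph V}
    [DecidableRel G.Adj] {r : ℕ} (hreg : G.IsRegularOfDegree r) (i : V) :
    ∑ j, G.adjMatrix ℝ i j = r := by
  simpa [mulVec, dotProduct] using adjMatrix_mulVec_const_apply_of_regular (α := ℝ) (a := 1) hreg

lemma graphEnergy_joinGraph_bot [Fintype V] [DecidableEq V] [Fintype W] [DecidableEq W]
    (G : SimpleGraph V) [DecidableRel G.Adj] {r : ℕ} (hreg : G.IsRegularOfDegree r) :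
    graphEnergy (joinGraph G (⊥ : SimpleGraph W)) =
      graphEnergy G + √(r ^ 2 + 4 * (Fintype.card W * Fintype.card V)) - r := by
  classical
  have hcharpoly := congrArg rootAbsSum
    (charpoly_fromBlocks_ones_zero (n := W) (sum_adjMatrix_row_of_isRegularOfDegree hreg))
  rw [← adjMatrix_bot (α := ℝ), ← adjMatrix_joinGraph,
    rootAbsSum_mul (Monic.ne_zero (by monicity!)) (charpoly_monic _).ne_zero,
    rootAbsSum_mul X_ne_zero (X_sub_C_ne_zero _),
    rootAbsSum_mul (Monic.ne_zero (by monicity!)) (charpoly_monic _).ne_zero,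
    rootAbsSum_mul (pow_ne_zero _ X_ne_zero) (Monic.ne_zero (by monicity!)),
    rootAbsSum_X_sq_sub_C_mul_X_sub_C _ _ (by positivity), rootAbsSum_X, rootAbsSum_X_sub_C,
    rootAbsSum_X_pow, abs_of_nonneg (Nat.cast_nonneg r)] at hcharpoly
  rw [graphEnergy_eq_rootAbsSum_charpoly, graphEnergy_eq_rootAbsSum_charpoly]
  linarith

/-- Let `G` be an `r`-regular orderenergetic graph of order `p` and `n ≥ 1`.
Then the join `G ∨ K̄_n` is orderenergetic (i.e. its energy equals its order
`p + n`) if and only if `n = 4p - 2r`. -/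
theorem joinGraph_empty_orderenergetic_iff [Fintype V] [DecidableEq V]
    (G : SimpleGraph V) [DecidableRel G.Adj] (p r n : ℕ) (hp : Fintype.card V = p)
    (hreg : G.IsRegularOfDegree r) (hord : graphEnergy G = p) (hn : 1 ≤ n) :
    graphEnergy (joinGraph G (⊥ : SimpleGraph (Fin n))) = (p + n : ℕ) ↔
      (n : ℤ) = 4 * p - 2 * r := by
  have hn0 : (n : ℝ) ≠ 0 := Nat.cast_ne_zero.2 (by omega)
  rw [graphEnergy_joinGraph_bot G hreg, hord, Fintype.card_fin, hp]
  calc (p : ℝ) + √(r ^ 2 + 4 * (n * p)) - r = (p + n : ℕ)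
      ↔ √(r ^ 2 + 4 * (n * p)) = n + r := by push_cast; constructor <;> intro h <;> linarith
    _ ↔ r ^ 2 + 4 * (n * p) = ((n : ℝ) + r) ^ 2 :=
      Real.sqrt_eq_iff_eq_sq (by positivity) (by positivity)
    _ ↔ (n : ℝ) * (n - (4 * p - 2 * r)) = 0 := by constructor <;> intro h <;> linarith
    _ ↔ (n : ℤ) = 4 * p - 2 * r := by
      rw [mul_eq_zero, or_iff_right hn0, sub_eq_zero]
      exact_mod_cast Iff.rfl
end

section
/- Let G₁ and G₂ be hypoenergetic graphs (of orders n₁ ≥ 1 and n₂ ≥ 1 respectively). Then their Kronecker (tensor) product G₁ × G₂ is hypoenergetic, i.e., ε(G₁ × G₂) < n₁n₂. -/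
open Matrix SimpleGraph Finset

variable {V W : Type*}

/-!
The energy of a graph is the trace of the absolute value `|A| = √(A* A)` of its adjacency
matrix `A`. The adjacency matrix of `G₁ × G₂` is `A₁ ⊗ A₂`, and `|A₁| ⊗ |A₂|` is positive
semidefinite with square `(A₁ ⊗ A₂)* (A₁ ⊗ A₂)`, so by uniqueness of square roots
`|A₁ ⊗ A₂| = |A₁| ⊗ |A₂|`. Taking traces, energy is multiplicative:
`ε(G₁ × G₂) = ε(G₁) ε(G₂) < n₁ n₂`.
-/

open scoped Kronecker MatrixOrder

namespace Matrix

variable {𝕜 : Type*} [RCLike 𝕜] {n m : Type*} [Fintype n] [DecidableEq n] [Fintype m]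
  [DecidableEq m]

theorem cfcAbs_kronecker (A : Matrix n n 𝕜) (B : Matrix m m 𝕜) :
    CFC.abs (A ⊗ₖ B) = CFC.abs A ⊗ₖ CFC.abs B := by
  have hnonneg : 0 ≤ CFC.abs A ⊗ₖ CFC.abs B := by
    rw [nonneg_iff_posSemidef]
    exact (nonneg_iff_posSemidef.mp (CFC.abs_nonneg A)).kronecker
      (nonneg_iff_posSemidef.mp (CFC.abs_nonneg B))
  rw [CFC.abs, CFC.sqrt_eq_iff _ _ (star_mul_self_nonneg _) hnonneg, ← mul_kronecker_mul,
    CFC.abs_mul_abs, CFC.abs_mul_abs, mul_kronecker_mul]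
  simp only [star_eq_conjTranspose, conjTranspose_kronecker]

theorem IsHermitian.trace_cfcAbs {A : Matrix n n 𝕜} (hA : A.IsHermitian) :
    (CFC.abs A).trace = ∑ i, ((|hA.eigenvalues i| : ℝ) : 𝕜) := by
  rw [CFC.abs_eq_cfc_norm A hA.isSelfAdjoint, hA.cfc_eq, IsHermitian.cfc,
    Unitary.conjStarAlgAut_apply, trace_mul_cycle, Unitary.coe_star_mul_self, one_mul,
    trace_diagonal]
  simp only [Real.norm_eq_abs, Function.comp_apply]

end Matrix

namespace SimpleGraph

theorem adjMatrix_tensorGraph {R : Type*} [MulZeroOneClass R] (G : SimpleGraph V)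
    (H : SimpleGraph W) [DecidableRel G.Adj] [DecidableRel H.Adj]
    [DecidableRel (tensorGraph G H).Adj] :
    (tensorGraph G H).adjMatrix R = G.adjMatrix R ⊗ₖ H.adjMatrix R := by
  ext ⟨a, b⟩ ⟨c, d⟩
  simp only [adjMatrix_apply, kroneckerMap_apply, ite_zero_mul_ite_zero, mul_one]
  exact if_congr Iff.rfl rfl rfl

variable [Fintype V] [DecidableEq V] [Fintype W] [DecidableEq W]

theorem graphEnergy_eq_trace_cfcAbs (G : SimpleGraph V) [DecidableRel G.Adj] :
    graphEnergy G = (CFC.abs (G.adjMatrix ℝ)).trace := by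
  rw [(adjMatrix_isHermitian G).trace_cfcAbs, graphEnergy]
  simp only [RCLike.ofReal_real_eq_id, id_eq]
  congr!

theorem graphEnergy_nonneg (G : SimpleGraph V) : 0 ≤ graphEnergy G := by
  rw [graphEnergy]
  positivity

theorem graphEnergy_tensorGraph (G : SimpleGraph V) (H : SimpleGraph W) :
    graphEnergy (tensorGraph G H) = graphEnergy G * graphEnergy H := by
  classical
  rw [graphEnergy_eq_trace_cfcAbs, graphEnergy_eq_trace_cfcAbs, graphEnergy_eq_trace_cfcAbs,
    adjMatrix_tensorGraph, Matrix.cfcAbs_kronecker, trace_kronecker]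

end SimpleGraph

theorem tensorGraph_hypoenergetic_general [Fintype V] [DecidableEq V] [Fintype W] [DecidableEq W]
    (G₁ : SimpleGraph V) (G₂ : SimpleGraph W) (n₁ n₂ : ℕ)
    (hyp₁ : graphEnergy G₁ < n₁) (hyp₂ : graphEnergy G₂ < n₂) :
    graphEnergy (tensorGraph G₁ G₂) < (n₁ : ℝ) * n₂ := by
  rw [graphEnergy_tensorGraph]
  exact mul_lt_mul'' hyp₁ hyp₂ (graphEnergy_nonneg G₁) (graphEnergy_nonneg G₂)

/-- The Kronecker (tensor) product of two hypoenergetic graphs is hypoenergetic. -/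
theorem tensorGraph_hypoenergetic [Fintype V] [DecidableEq V] [Fintype W] [DecidableEq W]
    (G₁ : SimpleGraph V) (G₂ : SimpleGraph W) (n₁ n₂ : ℕ)
    (h₁ : Fintype.card V = n₁) (h₂ : Fintype.card W = n₂)
    (hn₁ : 1 ≤ n₁) (hn₂ : 1 ≤ n₂)
    (hyp₁ : graphEnergy G₁ < n₁) (hyp₂ : graphEnergy G₂ < n₂) :
    graphEnergy (tensorGraph G₁ G₂) < (n₁ : ℝ) * n₂ :=
  tensorGraph_hypoenergetic_general G₁ G₂ n₁ n₂ hyp₁ hyp₂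
end

section
/- Let G be a hypoenergetic graph of order p and let m ≥ 1. Then the m-shadow graph of the duplicate graph of G, D_m(D(G)), is hypoenergetic, i.e., ε(D_m(D(G))) < 2mp. -/
open Matrix SimpleGraph Finset

variable {V W : Type*}

/-!
Write `A(G) = U diag(μ) Uᵀ` with `U` orthogonal. The duplicate graph has adjacency matrix
`[[0, A], [A, 0]]`, diagonalised by the orthogonal matrix `(1/√2) [[U, U], [U, -U]]` with
eigenvalues `±μ`, so `ε(D(G)) = 2 ε(G)`. The shadow graph has adjacency matrix `J_m ⊗ A`, whose
eigenvalues are the products of those of `J_m` and `A`; as `J_m` is positive semidefinite of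
trace `m`, this gives `ε(D_m(H)) = m ε(H)`. Hence `ε(D_m(D(G))) = 2m ε(G) < 2mp`.
-/

open Kronecker

namespace Matrix

variable {ι κ : Type*} [Fintype ι] [DecidableEq ι] [Fintype κ] [DecidableEq κ]

def HasOrthogonalDiagonalization (A : Matrix ι ι ℝ) (d : ι → ℝ) : Prop :=
  ∃ U : Matrix ι ι ℝ, Uᵀ * U = 1 ∧ A = U * diagonal d * Uᵀ

theorem IsHermitian.hasOrthogonalDiagonalization {A : Matrix ι ι ℝ} (hA : A.IsHermitian) :
    A.HasOrthogonalDiagonalization hA.eigenvalues := by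
  have hstar : star (hA.eigenvectorUnitary : Matrix ι ι ℝ) = (hA.eigenvectorUnitary)ᵀ :=
    conjTranspose_eq_transpose_of_trivial _
  refine ⟨hA.eigenvectorUnitary, ?_, ?_⟩
  · rw [← hstar, Unitary.coe_star_mul_self]
  · conv_lhs => rw [hA.spectral_theorem, Unitary.conjStarAlgAut_apply, hstar]
    rfl

theorem HasOrthogonalDiagonalization.charpoly_eq {A : Matrix ι ι ℝ} {d : ι → ℝ}
    (h : A.HasOrthogonalDiagonalization d) :
    A.charpoly = ∏ i, (Polynomial.X - Polynomial.C (d i)) := by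
  obtain ⟨U, hU, rfl⟩ := h
  rw [Matrix.mul_assoc, charpoly_mul_comm, Matrix.mul_assoc, hU, Matrix.mul_one,
    charpoly_diagonal]

theorem IsHermitian.sum_comp_eigenvalues_of_hasOrthogonalDiagonalization {A : Matrix ι ι ℝ}
    {d : ι → ℝ} (hA : A.IsHermitian) (h : A.HasOrthogonalDiagonalization d) (f : ℝ → ℝ) :
    ∑ i, f (hA.eigenvalues i) = ∑ i, f (d i) := by
  have hroots : univ.val.map hA.eigenvalues = univ.val.map d := by
    have := hA.roots_charpoly_eq_eigenvalues
    rw [h.charpoly_eq, Polynomial.roots_prod _ _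
      (by simp [prod_ne_zero_iff, Polynomial.X_sub_C_ne_zero])] at this
    simpa using this.symm
  simpa only [Multiset.map_map, Function.comp_def, Finset.sum_map_val] using
    congrArg (fun s => (s.map f).sum) hroots

theorem HasOrthogonalDiagonalization.kronecker {A : Matrix ι ι ℝ} {B : Matrix κ κ ℝ}
    {a : ι → ℝ} {b : κ → ℝ} (hA : A.HasOrthogonalDiagonalization a)
    (hB : B.HasOrthogonalDiagonalization b) :
    (A ⊗ₖ B).HasOrthogonalDiagonalization fun x => a x.1 * b x.2 := by
  obtain ⟨U, hU, rfl⟩ := hA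
  obtain ⟨W, hW, rfl⟩ := hB
  refine ⟨U ⊗ₖ W, ?_, ?_⟩
  · rw [← kroneckerMap_transpose, ← mul_kronecker_mul, hU, hW, one_kronecker_one]
  · rw [mul_kronecker_mul, mul_kronecker_mul, diagonal_kronecker_diagonal,
      kroneckerMap_transpose]

theorem HasOrthogonalDiagonalization.fromBlocks_zero {A : Matrix ι ι ℝ} {a : ι → ℝ}
    (hA : A.HasOrthogonalDiagonalization a) :
    (fromBlocks 0 A A 0).HasOrthogonalDiagonalization (Sum.elim a (-a)) := by
  obtain ⟨U, hU, rfl⟩ := hA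
  have hc : (√2)⁻¹ * (√2)⁻¹ = (1 / 2 : ℝ) := by
    rw [← mul_inv, Real.mul_self_sqrt zero_le_two, one_div]
  have hneg : diagonal (-a) = -diagonal a := (diagonal_neg a).symm
  refine ⟨(√2)⁻¹ • fromBlocks U U U (-U), ?_, ?_⟩
  · rw [transpose_smul, smul_mul_smul_comm, hc, fromBlocks_transpose, fromBlocks_multiply]
    simp only [transpose_neg, Matrix.mul_neg, Matrix.neg_mul, neg_neg, hU, add_neg_cancel]
    rw [fromBlocks_smul, smul_zero, ← two_smul ℝ, smul_smul]
    norm_num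
  · rw [transpose_smul, smul_mul_assoc, Matrix.smul_mul, Matrix.mul_smul, smul_smul, hc,
      fromBlocks_transpose, ← fromBlocks_diagonal, hneg, fromBlocks_multiply,
      fromBlocks_multiply]
    simp only [transpose_neg, Matrix.mul_neg, Matrix.neg_mul, neg_neg, Matrix.mul_zero,
      add_zero, zero_add, add_neg_cancel]
    rw [fromBlocks_smul, smul_zero, ← two_smul ℝ, smul_smul]
    norm_num

theorem PosSemidef.sum_abs_eigenvalues {A : Matrix ι ι ℝ} (hA : A.PosSemidef) :
    ∑ i, |hA.isHermitian.eigenvalues i| = A.trace := by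
  rw [hA.isHermitian.trace_eq_sum_eigenvalues]
  exact sum_congr rfl fun i _ => abs_of_nonneg (hA.eigenvalues_nonneg i)

omit [DecidableEq ι] in
theorem posSemidef_of_const_one : (of fun _ _ => (1 : ℝ) : Matrix ι ι ℝ).PosSemidef := by
  convert posSemidef_vecMulVec_self_star (1 : ι → ℝ) using 1
  ext i j
  simp [vecMulVec_apply]

end Matrix

namespace SimpleGraph

theorem adjMatrix_duplicateGraph (G : SimpleGraph V) [DecidableRel G.Adj]
    [DecidableRel (duplicateGraph G).Adj] :
    (duplicateGraph G).adjMatrix ℝ = fromBlocks 0 (G.adjMatrix ℝ) (G.adjMatrix ℝ) 0 := by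
  ext (a | a) (b | b) <;> simp only [adjMatrix_apply] <;> simp [duplicateGraph] <;> congr

theorem adjMatrix_shadowGraph (m : ℕ) (G : SimpleGraph V) [DecidableRel G.Adj]
    [DecidableRel (shadowGraph m G).Adj] :
    (shadowGraph m G).adjMatrix ℝ =
      (of fun _ _ => 1 : Matrix (Fin m) (Fin m) ℝ) ⊗ₖ G.adjMatrix ℝ := by
  ext ⟨i, u⟩ ⟨j, v⟩
  simp only [adjMatrix_apply, kroneckerMap_apply, of_apply, one_mul]
  exact if_congr Iff.rfl rfl rfl

variable [Fintype V] [DecidableEq V]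

theorem graphEnergy_eq_of_hasOrthogonalDiagonalization (G : SimpleGraph V) [DecidableRel G.Adj]
    {d : V → ℝ} (h : (G.adjMatrix ℝ).HasOrthogonalDiagonalization d) :
    graphEnergy G = ∑ v, |d v| := by
  classical
  unfold graphEnergy
  convert (adjMatrix_isHermitian G).sum_comp_eigenvalues_of_hasOrthogonalDiagonalization h abs

theorem graphEnergy_duplicateGraph (G : SimpleGraph V) :
    graphEnergy (duplicateGraph G) = 2 * graphEnergy G := by
  classical
  have hG := (adjMatrix_isHermitian G).hasOrthogonalDiagonalization
  have hD := hG.fromBlocks_zero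
  rw [← adjMatrix_duplicateGraph] at hD
  rw [graphEnergy_eq_of_hasOrthogonalDiagonalization _ hG,
    graphEnergy_eq_of_hasOrthogonalDiagonalization _ hD, Fintype.sum_sum_type]
  simp [two_mul]

theorem graphEnergy_shadowGraph (m : ℕ) (G : SimpleGraph V) :
    graphEnergy (shadowGraph m G) = m * graphEnergy G := by
  classical
  have hJ : (of fun _ _ => (1 : ℝ) : Matrix (Fin m) (Fin m) ℝ).PosSemidef :=
    posSemidef_of_const_one
  have hG := (adjMatrix_isHermitian G).hasOrthogonalDiagonalization
  have hS := hJ.isHermitian.hasOrthogonalDiagonalization.kronecker hG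
  rw [← adjMatrix_shadowGraph] at hS
  rw [graphEnergy_eq_of_hasOrthogonalDiagonalization _ hG,
    graphEnergy_eq_of_hasOrthogonalDiagonalization _ hS, Fintype.sum_prod_type]
  simp_rw [abs_mul, ← mul_sum, ← sum_mul, hJ.sum_abs_eigenvalues]
  simp [trace]

end SimpleGraph

theorem shadowGraph_duplicateGraph_hypoenergetic_general [Fintype V] [DecidableEq V]
    (G : SimpleGraph V) (p m : ℕ)
    (hyp : graphEnergy G < p) (hm : 1 ≤ m) :
    graphEnergy (shadowGraph m (duplicateGraph G)) < 2 * (m : ℝ) * p := by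
  have hm' : (0 : ℝ) < m := by exact_mod_cast hm
  rw [graphEnergy_shadowGraph, graphEnergy_duplicateGraph, mul_left_comm, mul_assoc]
  gcongr

/-- If `G` is a hypoenergetic graph of order `p` and `m ≥ 1`, then the m-shadow
graph of the duplicate graph, `D_m(D(G))`, is hypoenergetic: its energy is less
than its order `2 * m * p`. -/
theorem shadowGraph_duplicateGraph_hypoenergetic [Fintype V] [DecidableEq V]
    (G : SimpleGraph V) (p m : ℕ) (hp : Fintype.card V = p)
    (hyp : graphEnergy G < p) (hm : 1 ≤ m) :
    graphEnergy (shadowGraph m (duplicateGraph G)) < 2 * (m : ℝ) * p :=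
  shadowGraph_duplicateGraph_hypoenergetic_general G p m hyp hm
end
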